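/- Let (N_n)_{n ≥ 1} be a nondecreasing sequence of ℕ ∪ {∞}-valued random variables on a probability space with P(sup_n N_n = ∞) = α > 0. Then there exists a nondecreasing function g : ℕ → ℕ with g(n) → ∞ such that P(∀ n ≥ 1, N_n ≥ g(n)) ≥ α/2. -/

import Mathlib

/-!
Let `A = {sup_n N_n = ∞}`. For each level `k` the events `A ∩ {N_n > k}` exhaust `A` as `n → ∞`,
so one can pick a time `m k` with `P(A \ {N_{m k} > k}) ≤ ε_k`, where `∑ ε_k ≤ α/2`. On the event
`A ∩ ⋂_k {N_{m k} > k}`, of probability at least `α/2`, monotonicity of `N` gives `N_n ≥ g n` for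
`g n` the largest `k ≤ n` with `m k ≤ n`.
-/

open MeasureTheory Filter Topology
open scoped ENNReal

section MeasureDiff

variable {Ω : Type*} [MeasurableSpace Ω] {μ : Measure Ω}

theorem tendsto_measure_diff_of_monotone {s : Set Ω} {t : ℕ → Set Ω}
    (hs : NullMeasurableSet s μ) (hμs : μ s ≠ ∞) (ht : ∀ n, NullMeasurableSet (t n) μ)
    (hmono : Monotone t) (hcover : s ⊆ ⋃ n, t n) :
    Tendsto (fun n => μ (s \ t n)) atTop (𝓝 0) := by
  have hempty : ⋂ n, s \ t n = ∅ := by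
    rw [← Set.sdiff_iUnion, Set.sdiff_eq_empty.mpr hcover]
  simpa [Function.comp_def, hempty] using tendsto_measure_iInter_atTop
    (fun n => hs.diff (ht n)) (fun _ _ hab => Set.sdiff_subset_sdiff_right (hmono hab))
    ⟨0, ne_top_of_le_ne_top hμs (measure_mono Set.sdiff_subset)⟩

theorem exists_measure_diff_iInter_le {s : Set Ω} {t : ℕ → ℕ → Set Ω}
    (ht : ∀ k, Tendsto (fun n => μ (s \ t k n)) atTop (𝓝 0)) {δ : ℝ≥0∞} (hδ : δ ≠ 0) :
    ∃ m : ℕ → ℕ, μ (s \ ⋂ k, t k (m k)) ≤ δ := by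
  obtain ⟨ε, hε_pos, hε_sum⟩ := ENNReal.exists_pos_sum_of_countable hδ ℕ
  have hsmall : ∀ k, ∃ n, μ (s \ t k n) ≤ ε k := fun k =>
    ((ht k).eventually (ge_mem_nhds (ENNReal.coe_pos.mpr (hε_pos k)))).exists
  choose m hm using hsmall
  refine ⟨m, ?_⟩
  calc μ (s \ ⋂ k, t k (m k)) = μ (⋃ k, s \ t k (m k)) := by rw [Set.sdiff_iInter]
    _ ≤ ∑' k, μ (s \ t k (m k)) := measure_iUnion_le _
    _ ≤ ∑' k, (ε k : ℝ≥0∞) := ENNReal.tsum_le_tsum hm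
    _ ≤ δ := hε_sum.le

end MeasureDiff

theorem ENat.setOf_iSup_eq_top {ι Ω : Type*} (f : ι → Ω → ℕ∞) :
    {ω | ⨆ i, f i ω = ⊤} = ⋂ k : ℕ, ⋃ i, {ω | (k : ℕ∞) < f i ω} := by
  ext ω
  simp [ENat.eq_top_iff_forall_gt, lt_iSup_iff]

theorem Nat.exists_monotone_tendsto_atTop_apply_le (m : ℕ → ℕ) :
    ∃ g : ℕ → ℕ, Monotone g ∧ Tendsto g atTop atTop ∧ ∀ n, g n ≠ 0 → m (g n) ≤ n := by
  refine ⟨fun n => Nat.findGreatest (fun j => m j ≤ n) n, ?_, ?_, ?_⟩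
  · exact fun a b hab => Nat.findGreatest_mono (fun j (h : m j ≤ a) => h.trans hab) hab
  · refine tendsto_atTop_atTop.mpr fun b => ⟨max b (m b), fun n hn => ?_⟩
    exact Nat.le_findGreatest ((le_max_left _ _).trans hn) ((le_max_right _ _).trans hn)
  · exact fun n => (Nat.findGreatest_eq_iff.mp rfl).2.1

theorem stmt7 {Ω : Type*} [MeasurableSpace Ω] (P : Measure Ω) [IsProbabilityMeasure P]
    (N : ℕ → Ω → ℕ∞) (hNmeas : ∀ n, Measurable (N n))
    (hNmono : ∀ ω, Monotone fun n => N n ω)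
    (α : ℝ) (hα : 0 < α)
    (hsup : P {ω | (⨆ n, N n ω) = ⊤} = ENNReal.ofReal α) :
    ∃ g : ℕ → ℕ, Monotone g ∧ Filter.Tendsto g Filter.atTop Filter.atTop ∧
      ENNReal.ofReal (α / 2) ≤ P {ω | ∀ n, 1 ≤ n → (g n : ℕ∞) ≤ N n ω} := by
  set A := {ω | (⨆ n, N n ω) = ⊤}
  set E : ℕ → ℕ → Set Ω := fun k n => {ω | (k : ℕ∞) < N n ω}
  have hA_eq : A = ⋂ k, ⋃ n, E k n := ENat.setOf_iSup_eq_top N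
  have hE : ∀ k n, MeasurableSet (E k n) := fun k n =>
    hNmeas n (.of_discrete (s := Set.Ioi (k : ℕ∞)))
  have hA : MeasurableSet A := hA_eq ▸ .iInter fun k => .iUnion (hE k)
  have hlevel : ∀ k, Tendsto (fun n => P (A \ E k n)) atTop (𝓝 0) := fun k =>
    tendsto_measure_diff_of_monotone hA.nullMeasurableSet (measure_ne_top P A)
      (fun n => (hE k n).nullMeasurableSet) (fun a b hab ω hω => hω.trans_le (hNmono ω hab))
      (hA_eq ▸ Set.iInter_subset _ k)
  obtain ⟨m, hm⟩ := exists_measure_diff_iInter_le hlevel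
    (ENNReal.ofReal_pos.mpr (half_pos hα)).ne'
  obtain ⟨g, hg_mono, hg_tendsto, hmg⟩ := Nat.exists_monotone_tendsto_atTop_apply_le m
  have hgood : A \ (A \ ⋂ k, E k (m k)) ⊆ {ω | ∀ n, 1 ≤ n → (g n : ℕ∞) ≤ N n ω} := by
    intro ω hω n _
    have hωE : ω ∈ ⋂ k, E k (m k) := by_contra fun h => hω.2 ⟨hω.1, h⟩
    by_cases hgn : g n = 0
    · simp [hgn]
    · exact (Set.mem_iInter.mp hωE (g n)).le.trans (hNmono ω (hmg n hgn))
  refine ⟨g, hg_mono, hg_tendsto, ?_⟩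
  calc ENNReal.ofReal (α / 2) = P A - ENNReal.ofReal (α / 2) := by
        rw [hsup, ← ENNReal.ofReal_sub _ (half_pos hα).le, sub_half]
    _ ≤ P (A \ (A \ ⋂ k, E k (m k))) := (tsub_le_tsub_left hm _).trans le_measure_sdiff
    _ ≤ _ := measure_mono hgood
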